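/- arXiv:1012.0208 — 3 statements merged into one kernel-verified Lean document; each statement's English description precedes it below -/
import Mathlib

section
/- Let B = {t ∈ ℂ : |t| < ρ} and E = {z ∈ ℂ : |z| < r, Re z ≥ 0}. If f(t,z) is a function of two complex variables, holomorphic on B × {z : |z| < r, Re z > 0}, continuous on B × E, holomorphic in z across the interior and such that |f(t,z)| = 1 for all t ∈ B and all z ∈ E with Re z = 0, then f(t,z) does not depend on t, i.e., f(t,z) = f(t′,z) for all t, t′ ∈ B and z ∈ E. -/
/-!
On the flat edge `Re z = 0`, the function `t ↦ f t z` is the locally uniform limit of the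
holomorphic functions `t ↦ f t (z + ε)` as `ε → 0⁺`, so it is holomorphic; its modulus is
constantly `1`, so it is constant by the maximum modulus principle. Hence, for fixed `t, t'`, the
difference `g = f t - f t'` vanishes on the flat edge. Its Schwarz reflection across the imaginary
axis is continuous on the full disc and holomorphic off the axis, hence holomorphic by Morera's
theorem, and it vanishes on a segment of the axis; so it vanishes identically.
-/

open Complex Metric Set Filter
open scoped Topology ComplexConjugate Interval

theorem tendstoLocallyUniformlyOn_of_continuousOn_prod {α β γ : Type*} [TopologicalSpace α]
    [LocallyCompactSpace α] [TopologicalSpace β] [UniformSpace γ] {f : α → β → γ}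
    {U : Set α} {T : Set β} {z₀ : β} (hU : IsOpen U)
    (hf : ContinuousOn (Function.uncurry f) (U ×ˢ T)) (hz₀ : z₀ ∈ T) :
    TendstoLocallyUniformlyOn (fun z t => f t z) (fun t => f t z₀) (𝓝[T] z₀) U := by
  rw [tendstoLocallyUniformlyOn_iff_forall_isCompact hU]
  intro K hKU hK u hu
  have hswap : ContinuousOn (Function.uncurry fun z t => f t z) (T ×ˢ K) :=
    hf.comp continuous_swap.continuousOn fun p hp => ⟨hKU hp.2, hp.1⟩
  obtain ⟨v, hv, hvu⟩ := hK.mem_uniformity_of_prod hswap hz₀ (symm_le_uniformity hu)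
  exact Filter.mem_of_superset hv fun z hz t ht => hvu z hz t ht

theorem differentiableOn_of_continuousOn_prod_of_mem_closure {E β : Type*}
    [NormedAddCommGroup E] [NormedSpace ℂ E] [CompleteSpace E] [TopologicalSpace β]
    {f : ℂ → β → E} {U : Set ℂ} {S T : Set β} {z₀ : β} (hU : IsOpen U)
    (hf : ContinuousOn (Function.uncurry f) (U ×ˢ T)) (hz₀ : z₀ ∈ T) (hST : S ⊆ T)
    (hz₀S : z₀ ∈ closure S) (hS : ∀ z ∈ S, DifferentiableOn ℂ (fun t => f t z) U) :
    DifferentiableOn ℂ (fun t => f t z₀) U := by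
  have := mem_closure_iff_nhdsWithin_neBot.1 hz₀S
  have hlim : TendstoLocallyUniformlyOn (fun z t => f t z) (fun t => f t z₀) (𝓝[S] z₀) U :=
    fun u hu t ht => (tendstoLocallyUniformlyOn_of_continuousOn_prod hU hf hz₀ u hu t ht).imp
      fun _ h => ⟨h.1, h.2.filter_mono (nhdsWithin_mono _ hST)⟩
  exact hlim.differentiableOn (eventually_nhdsWithin_of_forall hS) hU

namespace Complex

section Morera

variable {E : Type*} [NormedAddCommGroup E] [NormedSpace ℂ E] {f : ℂ → E}

theorem integral_boundary_rect_eq_zero_of_differentiableAt_off_re_eq {a : ℝ} {z w : ℂ}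
    (hc : ContinuousOn f (Rectangle z w))
    (hd : ∀ x ∈ Rectangle z w, x.re ≠ a → DifferentiableAt ℂ f x) :
    (∫ x : ℝ in z.re..w.re, f (x + z.im * I)) - (∫ x : ℝ in z.re..w.re, f (x + w.im * I)) +
      I • (∫ y : ℝ in z.im..w.im, f (w.re + y * I)) -
      I • (∫ y : ℝ in z.im..w.im, f (z.re + y * I)) = 0 := by
  have off_line : ∀ p q, Rectangle p q ⊆ Rectangle z w →
      a ∉ Ioo (min p.re q.re) (max p.re q.re) →
      (∫ x : ℝ in p.re..q.re, f (x + p.im * I)) - (∫ x : ℝ in p.re..q.re, f (x + q.im * I)) +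
        I • (∫ y : ℝ in p.im..q.im, f (q.re + y * I)) -
        I • (∫ y : ℝ in p.im..q.im, f (p.re + y * I)) = 0 := by
    intro p q hpq ha
    refine integral_boundary_rect_eq_zero_of_continuousOn_of_differentiableOn f p q
      (hc.mono hpq) fun x hx => ?_
    rw [mem_reProdIm] at hx
    refine (hd x (hpq ?_) fun h => ha (h ▸ hx.1)).differentiableWithinAt
    exact mem_reProdIm.2 ⟨Ioo_subset_Icc_self hx.1, Ioo_subset_Icc_self hx.2⟩
  by_cases ha : a ∈ Ioo (min z.re w.re) (max z.re w.re)
  swap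
  · exact off_line z w subset_rfl ha
  -- cut the rectangle along the line `re = a`; the two integrals along the cut cancel
  have ha' : a ∈ [[z.re, w.re]] := Ioo_subset_Icc_self ha
  have hleft : Rectangle z ⟨a, w.im⟩ ⊆ Rectangle z w := reProdIm_subset_iff.2
    (prod_mono (uIcc_subset_uIcc left_mem_uIcc ha') subset_rfl)
  have hright : Rectangle ⟨a, z.im⟩ w ⊆ Rectangle z w := reProdIm_subset_iff.2
    (prod_mono (uIcc_subset_uIcc ha' right_mem_uIcc) subset_rfl)
  have hint : ∀ c ∈ [[z.im, w.im]], ∀ b ∈ [[z.re, w.re]],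
      IntervalIntegrable (fun x : ℝ => f (x + c * I)) MeasureTheory.volume b a := by
    intro c hc' b hb
    refine ContinuousOn.intervalIntegrable (hc.comp (by fun_prop) fun x hx => ?_)
    exact mem_reProdIm.2 ⟨by simpa using uIcc_subset_uIcc hb ha' hx, by simpa using hc'⟩
  have h₁ := off_line z ⟨a, w.im⟩ hleft (by simpa using fun h => h.le)
  have h₂ := off_line ⟨a, z.im⟩ w hright (by simpa using fun h => h.le)
  have e₁ := intervalIntegral.integral_add_adjacent_intervals
    (hint z.im left_mem_uIcc z.re left_mem_uIcc)
    (hint z.im left_mem_uIcc w.re right_mem_uIcc).symm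
  have e₂ := intervalIntegral.integral_add_adjacent_intervals
    (hint w.im right_mem_uIcc z.re left_mem_uIcc)
    (hint w.im right_mem_uIcc w.re right_mem_uIcc).symm
  rw [← e₁, ← e₂]
  simp only at h₁ h₂
  linear_combination (norm := abel) h₁ + h₂

theorem isConservativeOn_of_differentiableAt_off_re_eq {U : Set ℂ} {a : ℝ}
    (hc : ContinuousOn f U) (hd : ∀ z ∈ U, z.re ≠ a → DifferentiableAt ℂ f z) :
    IsConservativeOn f U := fun z w hzw => by
  rw [← add_eq_zero_iff_eq_neg, wedgeIntegral_add_wedgeIntegral_eq]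
  exact integral_boundary_rect_eq_zero_of_differentiableAt_off_re_eq (hc.mono hzw)
    fun x hx => hd x (hzw hx)

theorem differentiableOn_of_differentiableAt_off_re_eq [CompleteSpace E] {U : Set ℂ} {a : ℝ}
    (hU : IsOpen U) (hc : ContinuousOn f U) (hd : ∀ z ∈ U, z.re ≠ a → DifferentiableAt ℂ f z) :
    DifferentiableOn ℂ f U :=
  (isConservativeOn_and_continuousOn_iff_isDifferentiableOn hU).1
    ⟨isConservativeOn_of_differentiableAt_off_re_eq hc hd, hc⟩

end Morera

noncomputable def reflectImAxis (g : ℂ → ℂ) (z : ℂ) : ℂ :=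
  if 0 ≤ z.re then g z else conj (g (-conj z))

variable {g : ℂ → ℂ} {U : Set ℂ}

theorem continuousOn_reflectImAxis (hU : ∀ z ∈ U, -conj z ∈ U)
    (hc : ContinuousOn g (U ∩ {z | 0 ≤ z.re})) (hreal : ∀ z ∈ U, z.re = 0 → conj (g z) = g z) :
    ContinuousOn (reflectImAxis g) U := by
  refine ContinuousOn.if (fun z hz => ?_) (hc.mono ?_) ?_
  · have hz0 : z.re = 0 := frontier_le_subset_eq continuous_const continuous_re hz.2 |>.symm
    have : -conj z = z := Complex.ext (by simp [hz0]) (by simp)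
    rw [this, hreal z hz.1 hz0]
  · exact inter_subset_inter_right _ (closure_le_eq continuous_const continuous_re).subset
  · refine continuous_conj.comp_continuousOn
      (hc.comp (by fun_prop) fun z hz => ⟨hU z hz.1, ?_⟩)
    simpa using closure_lt_subset_le continuous_re continuous_const (by simpa using hz.2)

theorem differentiableAt_reflectImAxis_of_re_neg {z : ℂ} (hz : z.re < 0)
    (hg : DifferentiableAt ℂ g (-conj z)) : DifferentiableAt ℂ (reflectImAxis g) z := by
  have heq : reflectImAxis g =ᶠ[𝓝 z] conj ∘ (g ∘ Neg.neg) ∘ conj := by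
    filter_upwards [(isOpen_lt continuous_re continuous_const).mem_nhds hz] with w hw
    simp [reflectImAxis, not_le.2 (show w.re < 0 from hw)]
  rw [heq.differentiableAt_iff]
  simpa using (hg.comp (conj z) differentiableAt_id.neg).conj_conj

theorem differentiableAt_reflectImAxis_of_re_pos {z : ℂ} (hz : 0 < z.re)
    (hg : DifferentiableAt ℂ g z) : DifferentiableAt ℂ (reflectImAxis g) z := by
  have heq : reflectImAxis g =ᶠ[𝓝 z] g := by
    filter_upwards [(isOpen_lt continuous_const continuous_re).mem_nhds hz] with w hw
    simp [reflectImAxis, le_of_lt (show 0 < w.re from hw)]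
  rwa [heq.differentiableAt_iff]

theorem differentiableOn_reflectImAxis (hUo : IsOpen U)
    (hU : ∀ z ∈ U, -conj z ∈ U) (hc : ContinuousOn g (U ∩ {z | 0 ≤ z.re}))
    (hd : ∀ z ∈ U, 0 < z.re → DifferentiableAt ℂ g z)
    (hreal : ∀ z ∈ U, z.re = 0 → conj (g z) = g z) :
    DifferentiableOn ℂ (reflectImAxis g) U := by
  refine differentiableOn_of_differentiableAt_off_re_eq (a := 0) hUo
    (continuousOn_reflectImAxis hU hc hreal) fun z hz hz0 => ?_
  rcases hz0.lt_or_gt with hneg | hpos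
  · exact differentiableAt_reflectImAxis_of_re_neg hneg (hd _ (hU z hz) (by simpa using hneg))
  · exact differentiableAt_reflectImAxis_of_re_pos hpos (hd z hz hpos)

theorem frequently_re_eq_nhdsNE (z₀ : ℂ) : ∃ᶠ z in 𝓝[≠] z₀, z.re = z₀.re := by
  have hline : Tendsto (fun y : ℝ => z₀ + y * I) (𝓝[≠] 0) (𝓝[≠] z₀) := by
    refine tendsto_nhdsWithin_iff.2 ⟨?_, eventually_nhdsWithin_of_forall fun y hy => ?_⟩
    · exact (Continuous.tendsto' (by fun_prop) 0 z₀ (by simp)).mono_left nhdsWithin_le_nhds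
    · simpa using hy
  exact hline.frequently (Frequently.of_forall fun y => by simp)

theorem _root_.AnalyticOnNhd.eqOn_zero_of_eq_zero_on_imAxis {G : ℂ → ℂ} {U : Set ℂ}
    (hG : AnalyticOnNhd ℂ G U) (hUo : IsOpen U) (hU : IsPreconnected U) {z₀ : ℂ}
    (hz₀ : z₀ ∈ U) (hz₀re : z₀.re = 0) (h0 : ∀ z ∈ U, z.re = 0 → G z = 0) : EqOn G 0 U := by
  refine hG.eqOn_zero_of_preconnected_of_frequently_eq_zero hU hz₀ ?_
  refine ((frequently_re_eq_nhdsNE z₀).and_eventually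
    (mem_nhdsWithin_of_mem_nhds (hUo.mem_nhds hz₀))).mono fun z hz => ?_
  exact h0 z hz.2 (hz.1.trans hz₀re)

theorem eqOn_zero_of_eq_zero_on_imAxis {g : ℂ → ℂ} {r : ℝ}
    (hc : ContinuousOn g (ball 0 r ∩ {z | 0 ≤ z.re}))
    (hd : ∀ z ∈ ball (0 : ℂ) r, 0 < z.re → DifferentiableAt ℂ g z)
    (h0 : ∀ z ∈ ball (0 : ℂ) r, z.re = 0 → g z = 0) :
    EqOn g 0 (ball 0 r ∩ {z | 0 ≤ z.re}) := by
  rintro z ⟨hz, hzre⟩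
  have hG : AnalyticOnNhd ℂ (reflectImAxis g) (ball 0 r) :=
    (differentiableOn_reflectImAxis isOpen_ball (by simp) hc hd
      fun w hw hw0 => by rw [h0 w hw hw0, map_zero]).analyticOnNhd isOpen_ball
  have hG0 := hG.eqOn_zero_of_eq_zero_on_imAxis isOpen_ball (convex_ball 0 r).isPreconnected
    (mem_ball_self (pos_of_mem_ball hz)) zero_re
    fun w hw hw0 => by simp [reflectImAxis, hw0, h0 w hw hw0]
  simpa [reflectImAxis, show 0 ≤ z.re from hzre] using hG0 hz

theorem apply_eq_of_norm_const_on_imAxis {f : ℂ → ℂ → ℂ} {U : Set ℂ} {r c : ℝ}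
    (hU : IsOpen U) (hUc : IsPreconnected U)
    (hf : ContinuousOn (Function.uncurry f) (U ×ˢ (ball 0 r ∩ {z | 0 ≤ z.re})))
    (hd : ∀ z ∈ ball (0 : ℂ) r, 0 < z.re → DifferentiableOn ℂ (f · z) U) {z : ℂ}
    (hz : z ∈ ball 0 r) (hz0 : z.re = 0) (hnorm : ∀ t ∈ U, ‖f t z‖ = c) {t t' : ℂ}
    (ht : t ∈ U) (ht' : t' ∈ U) : f t z = f t' z := by
  have hdz : DifferentiableOn ℂ (f · z) U :=
    differentiableOn_of_continuousOn_prod_of_mem_closure (S := ball 0 r ∩ {w : ℂ | 0 < w.re})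
      hU hf ⟨hz, hz0.ge⟩
      (inter_subset_inter_right _ fun w (hw : 0 < w.re) => hw.le)
      (isOpen_ball.inter_closure ⟨hz, by simp [hz0]⟩) fun w hw => hd w hw.1 hw.2
  have hmax : IsMaxOn (norm ∘ (f · z)) U t := fun s hs => by simp [hnorm s hs, hnorm t ht]
  exact (eqOn_of_isPreconnected_of_isMaxOn_norm hUc hU hdz ht hmax ht').symm

end Complex

theorem no_t_dependence_on_flat_boundary_general
    (ρ r : ℝ) (f : ℂ → ℂ → ℂ)
    (hcont : ContinuousOn (fun x : ℂ × ℂ => f x.1 x.2)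
      (ball (0:ℂ) ρ ×ˢ {z : ℂ | ‖z‖ < r ∧ 0 ≤ z.re}))
    (hholo : ∀ t ∈ ball (0:ℂ) ρ, ∀ z : ℂ, ‖z‖ < r → 0 < z.re →
      AnalyticAt ℂ (fun x : ℂ × ℂ => f x.1 x.2) (t, z))
    (hmod : ∀ t ∈ ball (0:ℂ) ρ, ∀ z : ℂ, ‖z‖ < r → z.re = 0 →
      ‖f t z‖ = 1) :
    ∀ t ∈ ball (0:ℂ) ρ, ∀ t' ∈ ball (0:ℂ) ρ, ∀ z : ℂ,
      ‖z‖ < r → 0 ≤ z.re → f t z = f t' z := by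
  have hE : {z : ℂ | ‖z‖ < r ∧ 0 ≤ z.re} = ball 0 r ∩ {z | 0 ≤ z.re} := by
    ext; simp
  replace hcont :
      ContinuousOn (Function.uncurry f) (ball 0 ρ ×ˢ (ball 0 r ∩ {z | 0 ≤ z.re})) := hE ▸ hcont
  have hcont_z : ∀ t ∈ ball (0 : ℂ) ρ, ContinuousOn (f t) (ball 0 r ∩ {z | 0 ≤ z.re}) :=
    fun t ht => hcont.comp (f := fun z => (t, z)) (Continuous.continuousOn (by fun_prop))
      fun z hz => ⟨ht, hz⟩
  intro t ht t' ht' z hz hzre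
  have h_axis : ∀ w ∈ ball (0 : ℂ) r, w.re = 0 → f t w - f t' w = 0 := fun w hw hw0 =>
    sub_eq_zero.2 <| apply_eq_of_norm_const_on_imAxis isOpen_ball (convex_ball 0 ρ).isPreconnected
      hcont (fun z hz hzre s hs => (hholo s hs z (mem_ball_zero_iff.1 hz) hzre).curry_left
        |>.differentiableAt.differentiableWithinAt) hw hw0
      (fun s hs => hmod s hs w (mem_ball_zero_iff.1 hw) hw0) ht ht'
  have hdiff_z : ∀ s ∈ ball (0 : ℂ) ρ, ∀ w ∈ ball (0 : ℂ) r, 0 < w.re →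
      DifferentiableAt ℂ (f s) w := fun s hs w hw hwre =>
    (hholo s hs w (mem_ball_zero_iff.1 hw) hwre).curry_right.differentiableAt
  exact sub_eq_zero.1 <| eqOn_zero_of_eq_zero_on_imAxis ((hcont_z t ht).sub (hcont_z t' ht'))
    (fun w hw hwre => (hdiff_z t ht w hw hwre).sub (hdiff_z t' ht' w hw hwre)) h_axis
    ⟨mem_ball_zero_iff.2 hz, hzre⟩

/-- let `B = {t : |t| < ρ}` and `E = {z : |z| < r, Re z ≥ 0}`.  If
`f(t,z)` is holomorphic in the two complex variables `(t,z)` on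
`B × {|z| < r, Re z > 0}`, continuous on `B × E` (holomorphic in `z` across the
interior), and `|f(t,z)| = 1` for all `t ∈ B` and all `z ∈ E` with `Re z = 0`, then
`f(t,z)` does not depend on `t`: `f(t,z) = f(t',z)` for all `t, t' ∈ B` and `z ∈ E`. -/
theorem no_t_dependence_on_flat_boundary
    (ρ r : ℝ) (hρ : 0 < ρ) (hr : 0 < r) (f : ℂ → ℂ → ℂ)
    (hcont : ContinuousOn (fun x : ℂ × ℂ => f x.1 x.2)
      (ball (0:ℂ) ρ ×ˢ {z : ℂ | ‖z‖ < r ∧ 0 ≤ z.re}))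
    (hholo : ∀ t ∈ ball (0:ℂ) ρ, ∀ z : ℂ, ‖z‖ < r → 0 < z.re →
      AnalyticAt ℂ (fun x : ℂ × ℂ => f x.1 x.2) (t, z))
    (hholo_z : ∀ t ∈ ball (0:ℂ) ρ, ∀ z : ℂ, ‖z‖ < r → 0 < z.re →
      AnalyticAt ℂ (f t) z)
    (hmod : ∀ t ∈ ball (0:ℂ) ρ, ∀ z : ℂ, ‖z‖ < r → z.re = 0 →
      ‖f t z‖ = 1) :
    ∀ t ∈ ball (0:ℂ) ρ, ∀ t' ∈ ball (0:ℂ) ρ, ∀ z : ℂ,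
      ‖z‖ < r → 0 ≤ z.re → f t z = f t' z :=
  no_t_dependence_on_flat_boundary_general ρ r f hcont hholo hmod
end

section
/- Let 0 < r, D = {z ∈ ℂ : |z| < r}, ξ ∈ D∖{0}, and let P(z) = (−1/ξ)·((z−ξ)/z)·(1 − z·conj(ξ)/r²)⁻¹ and Q(z) = (−1/ξ)·((z−ξ)/z)·(1 − z·conj(ξ)/r²). Then P(z)·Q(z) = (1/z − 1/ξ)² for all z ∈ D∖{0} (so H(z) := 1/z − 1/ξ satisfies H² = PQ and H − 1/z is regular at 0), and log|P′(ξ)| − log|Q′(ξ)| = 2 log(1/(1 − (|ξ|/r)²)); i.e., the harmonic span s(D) for (D, 0, ξ) equals 2 log(1/(1 − (|ξ|/r)²)). -/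
open Complex Metric Set Filter
open scoped Topology

/-! Writing `g z = 1 - z * conj ξ / r²`, the factors `P = (z⁻¹ - ξ⁻¹) / g` and
`Q = (z⁻¹ - ξ⁻¹) * g` multiply to `(z⁻¹ - ξ⁻¹)²` because `g` has no zero in the disc
(`|z ξ| < r²`). Both vanish simply at `ξ`, so their derivatives there are
`-ξ⁻² / g ξ` and `-ξ⁻² * g ξ`, and `g ξ = 1 - (|ξ|/r)²` is real. -/

theorem hasDerivAt_of_eventuallyEq_sub_mul {𝕜 : Type*} [NontriviallyNormedField 𝕜]
    {f h : 𝕜 → 𝕜} {a : 𝕜} (hf : f =ᶠ[𝓝 a] fun z => (z - a) * h z)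
    (hh : DifferentiableAt 𝕜 h a) : HasDerivAt f (h a) a := by
  simpa using (((hasDerivAt_id a).sub_const a).mul hh.hasDerivAt).congr_of_eventuallyEq hf

theorem Real.log_norm_mul_inv_sub_log_norm_mul {𝕜 : Type*} [NormedDivisionRing 𝕜]
    {a s : 𝕜} (ha : a ≠ 0) (hs : s ≠ 0) :
    Real.log ‖a * s⁻¹‖ - Real.log ‖a * s‖ = 2 * Real.log ‖s⁻¹‖ := by
  have ha' : ‖a‖ ≠ 0 := norm_ne_zero_iff.mpr ha
  have hs' : ‖s‖ ≠ 0 := norm_ne_zero_iff.mpr hs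
  rw [norm_mul, norm_mul, norm_inv, Real.log_mul ha' (inv_ne_zero hs'), Real.log_mul ha' hs',
    Real.log_inv]
  ring

namespace Complex

theorem norm_mul_conj_div_sq_lt_one {r : ℝ} {z w : ℂ} (hz : z ∈ ball (0 : ℂ) r)
    (hw : w ∈ ball (0 : ℂ) r) : ‖z * starRingEnd ℂ w / (r : ℂ) ^ 2‖ < 1 := by
  rw [mem_ball_zero_iff] at hz hw
  have hr : 0 < r := (norm_nonneg w).trans_lt hw
  rw [norm_div, norm_mul, norm_conj, norm_pow, norm_real, Real.norm_of_nonneg hr.le,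
    div_lt_one (by positivity), sq]
  exact mul_lt_mul'' hz hw (norm_nonneg z) (norm_nonneg w)

theorem one_sub_mul_conj_div_sq_ne_zero {r : ℝ} {z w : ℂ} (hz : z ∈ ball (0 : ℂ) r)
    (hw : w ∈ ball (0 : ℂ) r) : 1 - z * starRingEnd ℂ w / (r : ℂ) ^ 2 ≠ 0 := by
  rw [sub_ne_zero]
  intro h
  simpa [← h] using norm_mul_conj_div_sq_lt_one hz hw

theorem one_sub_mul_conj_self_div_sq (r : ℝ) (w : ℂ) :
    1 - w * starRingEnd ℂ w / (r : ℂ) ^ 2 = ((1 - (‖w‖ / r) ^ 2 : ℝ) : ℂ) := by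
  rw [mul_conj, ← ofReal_pow, normSq_eq_norm_sq]
  push_cast
  ring

theorem neg_one_div_mul_sub_div {z w : ℂ} (hz : z ≠ 0) (hw : w ≠ 0) :
    -1 / w * ((z - w) / z) = z⁻¹ - w⁻¹ := by
  field_simp
  ring

end Complex

theorem harmonic_span_of_disc_general (r : ℝ) (ξ : ℂ)
    (hξ : ξ ∈ ball (0:ℂ) r) (hξ0 : ξ ≠ 0)
    (P Q : ℂ → ℂ)
    (hP : ∀ z : ℂ, z ≠ 0 →
      P z = (-1 / ξ) * ((z - ξ) / z) * (1 - z * (starRingEnd ℂ ξ) / (r:ℂ) ^ 2)⁻¹)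
    (hQ : ∀ z : ℂ, z ≠ 0 →
      Q z = (-1 / ξ) * ((z - ξ) / z) * (1 - z * (starRingEnd ℂ ξ) / (r:ℂ) ^ 2)) :
    (∀ z ∈ ball (0:ℂ) r, z ≠ 0 → P z * Q z = (z⁻¹ - ξ⁻¹) ^ 2) ∧
    ((fun z : ℂ => z⁻¹ - ξ⁻¹ - z⁻¹) = fun _ => -ξ⁻¹) ∧
    Real.log ‖deriv P ξ‖ - Real.log ‖deriv Q ξ‖ =
      2 * Real.log (1 / (1 - (‖ξ‖ / r) ^ 2)) := by
  set g : ℂ → ℂ := fun z => 1 - z * starRingEnd ℂ ξ / (r : ℂ) ^ 2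
  have hgξ : g ξ ≠ 0 := Complex.one_sub_mul_conj_div_sq_ne_zero hξ hξ
  refine ⟨fun z hz hz0 => ?_, by ext; ring, ?_⟩
  · rw [hP z hz0, hQ z hz0, Complex.neg_one_div_mul_sub_div hz0 hξ0]
    field_simp [Complex.one_sub_mul_conj_div_sq_ne_zero hz hξ]
  have hne : ∀ᶠ z in 𝓝 ξ, z ≠ 0 := eventually_ne_nhds hξ0
  have hPd : HasDerivAt P (-1 / ξ * ξ⁻¹ * (g ξ)⁻¹) ξ := by
    refine hasDerivAt_of_eventuallyEq_sub_mul (h := fun z => -1 / ξ * z⁻¹ * (g z)⁻¹) ?_ ?_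
    · filter_upwards [hne] with z hz
      rw [hP z hz]
      ring
    · fun_prop (disch := first | exact hξ0 | exact hgξ)
  have hQd : HasDerivAt Q (-1 / ξ * ξ⁻¹ * g ξ) ξ := by
    refine hasDerivAt_of_eventuallyEq_sub_mul (h := fun z => -1 / ξ * z⁻¹ * g z) ?_ ?_
    · filter_upwards [hne] with z hz
      rw [hQ z hz]
      ring
    · fun_prop (disch := exact hξ0)
  rw [hPd.deriv, hQd.deriv, Real.log_norm_mul_inv_sub_log_norm_mul (by simpa using hξ0) hgξ]
  simp only [g, Complex.one_sub_mul_conj_self_div_sq, ← Complex.ofReal_inv, Complex.norm_real,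
    Real.norm_eq_abs, Real.log_abs, one_div]

/-- let `0 < r`, `D = {|z| < r}`, `ξ ∈ D ∖ {0}`, and let
`P(z) = (−1/ξ)·((z−ξ)/z)·(1 − z·conj(ξ)/r²)⁻¹` and
`Q(z) = (−1/ξ)·((z−ξ)/z)·(1 − z·conj(ξ)/r²)`.  Then `P(z)·Q(z) = (1/z − 1/ξ)²` for all
`z ∈ D ∖ {0}` (so `H(z) := 1/z − 1/ξ` satisfies `H² = PQ` and `H − 1/z` is regular at
`0`), and `log|P′(ξ)| − log|Q′(ξ)| = 2 log(1/(1 − (|ξ|/r)²))`; i.e. the harmonic span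
`s(D)` for `(D, 0, ξ)` equals `2 log(1/(1 − (|ξ|/r)²))`. -/
theorem harmonic_span_of_disc (r : ℝ) (hr : 0 < r) (ξ : ℂ)
    (hξ : ξ ∈ ball (0:ℂ) r) (hξ0 : ξ ≠ 0)
    (P Q : ℂ → ℂ)
    (hP : ∀ z : ℂ, z ≠ 0 →
      P z = (-1 / ξ) * ((z - ξ) / z) * (1 - z * (starRingEnd ℂ ξ) / (r:ℂ) ^ 2)⁻¹)
    (hQ : ∀ z : ℂ, z ≠ 0 →
      Q z = (-1 / ξ) * ((z - ξ) / z) * (1 - z * (starRingEnd ℂ ξ) / (r:ℂ) ^ 2)) :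
    (∀ z ∈ ball (0:ℂ) r, z ≠ 0 → P z * Q z = (z⁻¹ - ξ⁻¹) ^ 2) ∧
    ((fun z : ℂ => z⁻¹ - ξ⁻¹ - z⁻¹) = fun _ => -ξ⁻¹) ∧
    Real.log ‖deriv P ξ‖ - Real.log ‖deriv Q ξ‖ =
      2 * Real.log (1 / (1 - (‖ξ‖ / r) ^ 2)) :=
  harmonic_span_of_disc_general r ξ hξ hξ0 P Q hP hQ
end

section
/- For every a ∈ ℂ with |a| > 1, the logarithmic area of the closed unit disc centered at a satisfies ∬_{{w : |w−a| ≤ 1}} |w|⁻² dA(w) = π log(|a|²/(|a|²−1)). Consequently, for 0 < |ξ| < 1 and H(z) = 1/z − 1/ξ on the unit disc D = {|z| < 1}, the complement of H(D) in the Riemann sphere is the closed disc {w : |w + 1/ξ| ≤ 1} and its logarithmic area equals E_log(H) = π log(1/(1−|ξ|²)) = (π/2)·s(D), where s(D) = 2 log(1/(1−|ξ|²)) is the harmonic span for (D, 0, ξ). -/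
open Complex Metric Set MeasureTheory

/-!
In polar coordinates about `a`, the logarithmic area of `closedBall a R` is `∫₀^R 2πr m(r) dr`,
where `m(r)` is the mean of `‖w‖⁻²` over the circle `‖w - a‖ = r`. On that circle
`(‖a‖² - r²) / ‖w‖²` is the real part of the Herglotz–Riesz kernel `(2a - w) / w`, which is
holomorphic on the closed disc, so the mean value property gives `m(r) = 1 / (‖a‖² - r²)` and the
radial integral is elementary. For the second part, `z ↦ 1/z - 1/ξ` maps the punctured unit disc
onto the exterior of `closedBall (-1/ξ) 1`, whose centre has modulus `1/|ξ| > 1`.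
-/

section

variable {E : Type*} [NormedAddCommGroup E] [NormedSpace ℝ E]

open Real

theorem integrableOn_comp_polarCoord_symm {f : ℂ → E} (hf : Integrable f) :
    IntegrableOn (fun p : ℝ × ℝ => p.1 • f (Complex.polarCoord.symm p)) polarCoord.target := by
  have hg : Integrable (f ∘ measurableEquivRealProd.symm) :=
    (volume_preserving_equiv_real_prod.symm).integrable_comp_emb
      measurableEquivRealProd.symm.measurableEmbedding |>.mpr hf
  have hjac := (integrableOn_image_iff_integrableOn_abs_det_fderiv_smul volume
    polarCoord.open_target.measurableSet
    (fun p _ => (hasFDerivAt_polarCoord_symm p).hasFDerivWithinAt) polarCoord.symm.injOn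
    (f ∘ measurableEquivRealProd.symm)).mp
    (by rw [polarCoord.symm_image_target_eq_source]; exact hg.integrableOn)
  refine hjac.congr_fun (fun p hp => ?_) polarCoord.open_target.measurableSet
  simp only [Function.comp_apply]
  rw [det_fderivPolarCoordSymm, abs_of_pos (mem_Ioi.mp hp.1),
    measurableEquivRealProd_symm_polarCoord_symm_apply]

theorem integral_eq_integral_Ioi_smul_circleAverage {f : ℂ → E} (hf : Integrable f) (c : ℂ) :
    ∫ z, f z = ∫ r in Ioi (0 : ℝ), (2 * π * r) • circleAverage f c r := by
  have hpolar : ∀ p : ℝ × ℝ, Complex.polarCoord.symm p + c = circleMap c p.1 p.2 := fun p => by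
    simp only [Complex.polarCoord_symm_apply, circleMap, exp_mul_I, ← ofReal_cos, ← ofReal_sin]
    ring
  have hint := integrableOn_comp_polarCoord_symm (hf.comp_add_right c)
  rw [polarCoord_target, Measure.volume_eq_prod] at hint
  rw [← integral_add_right_eq_self f c, ← Complex.integral_comp_polarCoord_symm,
    polarCoord_target, Measure.volume_eq_prod, setIntegral_prod _ hint]
  refine setIntegral_congr_fun measurableSet_Ioi fun r _ => ?_
  have hshift := ((periodic_circleMap c r).comp f).intervalIntegral_add_eq (-π) 0
  rw [zero_add, show -π + 2 * π = π by ring] at hshift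
  simp only [Function.comp_def] at hshift
  simp only [hpolar]
  rw [integral_smul, circleAverage, ← integral_Ioc_eq_integral_Ioo,
    ← intervalIntegral.integral_of_le (by linarith [pi_pos]), smul_smul, hshift]
  congr 1
  field_simp

theorem setIntegral_closedBall_eq_intervalIntegral_smul_circleAverage {f : ℂ → E} {c : ℂ} {R : ℝ}
    (hR : 0 ≤ R) (hf : IntegrableOn f (closedBall c R)) :
    ∫ z in closedBall c R, f z = ∫ r in 0..R, (2 * π * r) • circleAverage f c r := by
  have hradial : ∀ r ∈ Ioi (0 : ℝ),
      (2 * π * r) • circleAverage ((closedBall c R).indicator f) c r =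
        (Ioc 0 R).indicator (fun r => (2 * π * r) • circleAverage f c r) r := by
    intro r (hr : 0 < r)
    rcases le_or_gt r R with hrR | hRr
    · rw [indicator_of_mem (show r ∈ Ioc 0 R from ⟨hr, hrR⟩)]
      congr 1
      refine circleAverage_congr_sphere fun z hz => indicator_of_mem ?_ f
      exact mem_closedBall.mpr ((mem_sphere.mp hz).trans_le ((abs_of_pos hr).trans_le hrR))
    · rw [indicator_of_notMem fun h => hRr.not_ge h.2]
      have hzero : EqOn ((closedBall c R).indicator f) 0 (sphere c |r|) := fun z hz =>
        indicator_of_notMem (fun h => (mem_closedBall.mp h).not_gt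
          (by rwa [mem_sphere.mp hz, abs_of_pos hr])) f
      rw [circleAverage_congr_sphere hzero]
      simp [circleAverage]
  rw [← integral_indicator measurableSet_closedBall,
    integral_eq_integral_Ioi_smul_circleAverage
      (hf.integrable_indicator measurableSet_closedBall) c,
    setIntegral_congr_fun measurableSet_Ioi hradial, setIntegral_indicator measurableSet_Ioc,
    inter_eq_right.mpr Ioc_subset_Ioi_self, intervalIntegral.integral_of_le hR]

theorem circleAverage_inv_norm_sq {c : ℂ} {r : ℝ} (hr : |r| < ‖c‖) :
    circleAverage (fun w => (‖w‖ ^ 2)⁻¹) c r = (‖c‖ ^ 2 - r ^ 2)⁻¹ := by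
  have hc : c ≠ 0 := norm_pos_iff.mp ((abs_nonneg r).trans_lt hr)
  have hne : ∀ w ∈ closedBall c |r|, w ≠ 0 := fun w hw h0 => by
    rw [h0, mem_closedBall, dist_zero_left] at hw
    exact hw.not_gt hr
  set g : ℂ → ℂ := fun w => (2 * c - w) / w
  have hg : DiffContOnCl ℂ g (ball c |r|) :=
    (DifferentiableOn.div (by fun_prop) (by fun_prop) hne).diffContOnCl_ball subset_rfl
  have hkernel : EqOn (fun w => (‖w‖ ^ 2)⁻¹) (fun w => (‖c‖ ^ 2 - r ^ 2)⁻¹ • (re ∘ g) w)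
      (sphere c |r|) := by
    intro w hw
    have hpk := congrFun (poissonKernel_eq_re_herglotzRieszKernel (c := 0) (w := c - w)) c
    simp only [poissonKernel, herglotzRieszKernel, sub_zero, sub_sub_cancel,
      Function.comp_apply] at hpk
    rw [norm_sub_rev, mem_sphere_iff_norm.mp hw, sq_abs] at hpk
    have hr2 : ‖c‖ ^ 2 - r ^ 2 ≠ 0 := by nlinarith [sq_abs r, abs_nonneg r]
    have hw0 : ‖w‖ ≠ 0 := norm_ne_zero_iff.mpr (hne w (sphere_subset_closedBall hw))
    simp only [g, Function.comp_apply, smul_eq_mul]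
    rw [show 2 * c - w = c + (c - w) by ring, ← hpk]
    field_simp
  have hint : CircleIntegrable g c r :=
    (hg.continuousOn_ball.mono sphere_subset_closedBall).circleIntegrable'
  rw [circleAverage_congr_sphere hkernel, circleAverage_fun_smul,
    show re ∘ g = reCLM ∘ g from rfl, reCLM.circleAverage_comp_comm hint, hg.circleAverage]
  simp [g, two_mul, hc]

theorem setIntegral_closedBall_inv_norm_sq {a : ℂ} {R : ℝ} (hR : 0 ≤ R) (haR : R < ‖a‖) :
    ∫ w in closedBall a R, (‖w‖ ^ 2)⁻¹ = π * Real.log (‖a‖ ^ 2 / (‖a‖ ^ 2 - R ^ 2)) := by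
  have hlt : ∀ r ∈ uIcc 0 R, |r| < ‖a‖ := fun r hr => by
    rw [uIcc_of_le hR, mem_Icc] at hr
    rw [abs_of_nonneg hr.1]
    exact hr.2.trans_lt haR
  have hpos : ∀ r ∈ uIcc 0 R, 0 < ‖a‖ ^ 2 - r ^ 2 := fun r hr => by
    nlinarith [hlt r hr, sq_abs r, abs_nonneg r]
  have hcont : ContinuousOn (fun w : ℂ => (‖w‖ ^ 2)⁻¹) (closedBall a R) :=
    ContinuousOn.inv₀ (by fun_prop) fun w hw => by
      have : w ≠ 0 := by
        rintro rfl
        rw [mem_closedBall, dist_zero_left] at hw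
        exact hw.not_gt haR
      positivity
  have hderiv : ∀ r ∈ uIcc 0 R, HasDerivAt (fun r => -π * Real.log (‖a‖ ^ 2 - r ^ 2))
      (2 * π * r * (‖a‖ ^ 2 - r ^ 2)⁻¹) r := fun r hr => by
    refine ((((hasDerivAt_pow 2 r).const_sub _).log (hpos r hr).ne').const_mul (-π)).congr_deriv ?_
    field_simp [(hpos r hr).ne']
    ring
  have hint : IntervalIntegrable (fun r => 2 * π * r * (‖a‖ ^ 2 - r ^ 2)⁻¹) volume 0 R :=
    ContinuousOn.intervalIntegrable <|
      ContinuousOn.mul (by fun_prop) (ContinuousOn.inv₀ (by fun_prop) fun r hr => (hpos r hr).ne')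
  calc ∫ w in closedBall a R, (‖w‖ ^ 2)⁻¹
      = ∫ r in 0..R, (2 * π * r) • circleAverage (fun w => (‖w‖ ^ 2)⁻¹) a r :=
        setIntegral_closedBall_eq_intervalIntegral_smul_circleAverage hR
          (hcont.integrableOn_compact (isCompact_closedBall a R))
    _ = ∫ r in 0..R, 2 * π * r * (‖a‖ ^ 2 - r ^ 2)⁻¹ :=
        intervalIntegral.integral_congr fun r hr => by
          rw [circleAverage_inv_norm_sq (hlt r hr), smul_eq_mul]
    _ = π * Real.log (‖a‖ ^ 2 / (‖a‖ ^ 2 - R ^ 2)) := by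
      rw [intervalIntegral.integral_eq_sub_of_hasDerivAt hderiv hint,
        Real.log_div (pow_pos (hR.trans_lt haR) 2).ne' (hpos R right_mem_uIcc).ne',
        zero_pow two_ne_zero, sub_zero]
      ring

theorem image_inv_sub_ball_diff_zero (b : ℂ) :
    (fun z : ℂ => z⁻¹ - b) '' (ball 0 1 \ {0}) = (closedBall (-b) 1)ᶜ := by
  ext w
  simp only [mem_image, mem_sdiff, mem_ball_zero_iff, mem_singleton_iff, mem_compl_iff,
    mem_closedBall, dist_eq_norm, sub_neg_eq_add, not_le]
  constructor
  · rintro ⟨z, ⟨hz1, hz0⟩, rfl⟩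
    rw [sub_add_cancel, norm_inv]
    exact one_lt_inv₀ (norm_pos_iff.mpr hz0) |>.mpr hz1
  · intro hw
    have hw0 : w + b ≠ 0 := norm_pos_iff.mp (one_pos.trans hw)
    refine ⟨(w + b)⁻¹, ⟨?_, inv_ne_zero hw0⟩, by rw [inv_inv, add_sub_cancel_right]⟩
    rw [norm_inv]
    exact inv_lt_one_of_one_lt₀ hw

end

/-- for every `a ∈ ℂ` with `|a| > 1`, the logarithmic area of the
closed unit disc centered at `a` satisfies
`∬_{|w−a| ≤ 1} |w|⁻² dA(w) = π log(|a|²/(|a|²−1))`.  Consequently, for `0 < |ξ| < 1`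
and `H(z) = 1/z − 1/ξ` on the unit disc `D`, the complement of `H(D)` in the Riemann
sphere is the closed disc `{w : |w + 1/ξ| ≤ 1}` and its logarithmic area equals
`E_log(H) = π log(1/(1−|ξ|²)) = (π/2)·s(D)`, where `s(D) = 2 log(1/(1−|ξ|²))` is the
harmonic span for `(D, 0, ξ)`. -/
theorem logarithmic_area_of_disc_complement :
    (∀ a : ℂ, 1 < ‖a‖ →
      (∫ w in closedBall a 1, ((‖w‖) ^ 2)⁻¹) =
        Real.pi * Real.log ((‖a‖) ^ 2 / ((‖a‖) ^ 2 - 1))) ∧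
    (∀ ξ : ℂ, ξ ≠ 0 → ‖ξ‖ < 1 →
      ((Set.univ : Set ℂ) \ ((fun z : ℂ => z⁻¹ - ξ⁻¹) '' (ball (0:ℂ) 1 \ {0})) =
          closedBall (-ξ⁻¹) 1) ∧
      (∫ w in ((Set.univ : Set ℂ) \
          ((fun z : ℂ => z⁻¹ - ξ⁻¹) '' (ball (0:ℂ) 1 \ {0}))),
          ((‖w‖) ^ 2)⁻¹) =
        Real.pi * Real.log (1 / (1 - (‖ξ‖) ^ 2)) ∧
      Real.pi * Real.log (1 / (1 - (‖ξ‖) ^ 2)) =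
        Real.pi / 2 * (2 * Real.log (1 / (1 - (‖ξ‖) ^ 2)))) := by
  refine ⟨fun a ha => by
    simpa only [one_pow] using setIntegral_closedBall_inv_norm_sq zero_le_one ha, fun ξ hξ0 hξ1 => ?_⟩
  have hcompl : univ \ (fun z : ℂ => z⁻¹ - ξ⁻¹) '' (ball 0 1 \ {0}) = closedBall (-ξ⁻¹) 1 := by
    rw [← compl_eq_univ_sdiff, image_inv_sub_ball_diff_zero, compl_compl]
  have hcenter : ‖-ξ⁻¹‖ = ‖ξ‖⁻¹ := by rw [norm_neg, norm_inv]
  have hcenter_gt : 1 < ‖-ξ⁻¹‖ := hcenter ▸ (one_lt_inv₀ (norm_pos_iff.mpr hξ0)).mpr hξ1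
  refine ⟨hcompl, ?_, by ring⟩
  rw [hcompl, setIntegral_closedBall_inv_norm_sq zero_le_one hcenter_gt, hcenter]
  congr 2
  field_simp
end
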